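/- Every countable-dimensional compact metrizable space of positive dimension contains a one-dimensional compact subset. -/
import Mathlib


open Set
open Metric Topology

/-- Small inductive dimension at most `n` (with the convention that
`IndLe 0 X` means `ind X ≤ 0`, i.e. a basis of clopen sets). -/
def IndLe : ℕ → (X : Type) → [TopologicalSpace X] → Prop
  | 0, X, _ => ∀ (x : X) (U : Set X), IsOpen U → x ∈ U →
      ∃ V : Set X, IsClopen V ∧ x ∈ V ∧ V ⊆ U
  | n + 1, X, _ => ∀ (x : X) (U : Set X), IsOpen U → x ∈ U →
      ∃ V : Set X, IsOpen V ∧ x ∈ V ∧ V ⊆ U ∧ IndLe n (frontier V)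

/-- A subset is countable-dimensional if it is a countable union of
zero-dimensional subsets. -/
def CountableDimensional {X : Type} [TopologicalSpace X] (s : Set X) : Prop :=
  ∃ A : ℕ → Set X, (⋃ n, A n) = s ∧ ∀ n, IndLe 0 (A n)


section Aux
variable {X : Type} [MetricSpace X]

/-- Relative zero-dimensionality of `Z` as a subset of `X`. -/
def Ind0rel (Z : Set X) : Prop :=
  ∀ x ∈ Z, ∀ U : Set X, IsOpen U → x ∈ U →
    ∃ O W : Set X, IsOpen O ∧ IsOpen W ∧ x ∈ O ∧ O ∩ Z ⊆ U ∧ Z ⊆ O ∪ W ∧ O ∩ W ∩ Z = ∅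

lemma ind0rel_mono {Z' Z : Set X} (h : Z' ⊆ Z) (hZ : Ind0rel Z) : Ind0rel Z' := by
  intro x hx U hU hxU
  obtain ⟨O, W, hO, hW, hxO, hOZ, hcov, hdis⟩ := hZ x (h hx) U hU hxU
  refine ⟨O, W, hO, hW, hxO, fun y hy => hOZ ⟨hy.1, h hy.2⟩, fun y hy => hcov (h hy), ?_⟩
  apply eq_empty_iff_forall_notMem.mpr
  intro y hy
  exact eq_empty_iff_forall_notMem.mp hdis y ⟨hy.1, h hy.2⟩

lemma indLe0_def {Y : Type} [TopologicalSpace Y] :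
    IndLe 0 Y ↔ ∀ (x : Y) (U : Set Y), IsOpen U → x ∈ U →
      ∃ V : Set Y, IsClopen V ∧ x ∈ V ∧ V ⊆ U := Iff.rfl

lemma indLe0_of_inducing {Y : Type} [TopologicalSpace Y] (f : Y → X)
    (hf : IsInducing f) {T : Set X} (hr : range f ⊆ T) (h : Ind0rel T) : IndLe 0 Y := by
  rw [indLe0_def]
  intro y U hU hyU
  obtain ⟨U', hU', hpre⟩ := hf.isOpen_iff.mp hU
  obtain ⟨O, W, hO, hW, hfyO, hOT, hcov, hdis⟩ :=
    h (f y) (hr ⟨y, rfl⟩) U' hU' (by rw [← hpre] at hyU; exact hyU)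
  have hcompl : (f ⁻¹' O)ᶜ = f ⁻¹' W := by
    ext y'
    constructor
    · intro hy'
      rcases hcov (hr ⟨y', rfl⟩) with h1 | h1
      · exact absurd h1 hy'
      · exact h1
    · intro hy' hy'O
      exact eq_empty_iff_forall_notMem.mp hdis (f y') ⟨⟨hy'O, hy'⟩, hr ⟨y', rfl⟩⟩
  refine ⟨f ⁻¹' O, ⟨?_, hO.preimage hf.continuous⟩, hfyO, ?_⟩
  · rw [← isOpen_compl_iff, hcompl]
    exact hW.preimage hf.continuous
  · intro y' hy'
    rw [← hpre]
    exact hOT ⟨hy', hr ⟨y', rfl⟩⟩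

lemma ind0rel_of_indLe0 (S : Set X) (h : IndLe 0 S) : Ind0rel S := by
  rw [indLe0_def] at h
  intro x hx U hU hxU
  obtain ⟨V, hVclopen, hxV, hVU⟩ :=
    h ⟨x, hx⟩ (Subtype.val ⁻¹' U) (hU.preimage continuous_subtype_val) hxU
  obtain ⟨O, hO, hOpre⟩ := IsInducing.subtypeVal.isOpen_iff.mp hVclopen.2
  obtain ⟨W, hW, hWpre⟩ := IsInducing.subtypeVal.isOpen_iff.mp
    (isOpen_compl_iff.mpr hVclopen.1)
  refine ⟨O, W, hO, hW, ?_, ?_, ?_, ?_⟩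
  · have : (⟨x, hx⟩ : S) ∈ Subtype.val ⁻¹' O := hOpre.symm ▸ hxV
    exact this
  · intro z hz
    have : (⟨z, hz.2⟩ : S) ∈ V := by
      have : (⟨z, hz.2⟩ : S) ∈ Subtype.val ⁻¹' O := hz.1
      rwa [hOpre] at this
    exact hVU this
  · intro z hz
    by_cases hzV : (⟨z, hz⟩ : S) ∈ V
    · left; have := hOpre ▸ hzV; exact this
    · right; have : (⟨z, hz⟩ : S) ∈ Subtype.val ⁻¹' W := hWpre.symm ▸ hzV
      exact this
  · apply eq_empty_iff_forall_notMem.mpr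
    rintro z ⟨⟨hzO, hzW⟩, hzS⟩
    have h1 : (⟨z, hzS⟩ : S) ∈ V := by
      have : (⟨z, hzS⟩ : S) ∈ Subtype.val ⁻¹' O := hzO
      rwa [hOpre] at this
    have h2 : (⟨z, hzS⟩ : S) ∈ Vᶜ := by
      have : (⟨z, hzS⟩ : S) ∈ Subtype.val ⁻¹' W := hzW
      rwa [hWpre] at this
    exact h2 h1


lemma sep [SecondCountableTopology X] (Z : Set X)
    (hZ : ∀ x ∈ Z, ∀ U : Set X, IsOpen U → x ∈ U →
      ∃ O W : Set X, IsOpen O ∧ IsOpen W ∧ x ∈ O ∧ O ∩ Z ⊆ U ∧ Z ⊆ O ∪ W ∧ O ∩ W ∩ Z = ∅)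
    (A B : Set X) (hA : IsClosed A) (hB : IsClosed B) (hAB : A ∩ B = ∅) :
    ∃ U W : Set X, IsOpen U ∧ IsOpen W ∧ A ⊆ U ∧ B ⊆ W ∧ U ∩ W = ∅ ∧ Z ⊆ U ∪ W := by
  classical
  rcases A.eq_empty_or_nonempty with rfl | hAne
  · exact ⟨∅, univ, isOpen_empty, isOpen_univ, subset_rfl, subset_univ _, by simp, by simp⟩
  rcases B.eq_empty_or_nonempty with rfl | hBne
  · exact ⟨univ, ∅, isOpen_univ, isOpen_empty, subset_univ _, subset_rfl, by simp, by simp⟩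
  set a : X → ℝ := fun x => infDist x A with ha
  set b : X → ℝ := fun x => infDist x B with hb
  have hmemA : ∀ x, a x = 0 → x ∈ A := fun x hx => by
    have := (mem_closure_iff_infDist_zero hAne).mpr hx
    rwa [hA.closure_eq] at this
  have hmemB : ∀ x, b x = 0 → x ∈ B := fun x hx => by
    have := (mem_closure_iff_infDist_zero hBne).mpr hx
    rwa [hB.closure_eq] at this
  have hnotboth : ∀ x, x ∈ A → x ∈ B → False := fun x h1 h2 =>
    eq_empty_iff_forall_notMem.mp hAB x ⟨h1, h2⟩
  have key : ∃ Oa : Set X, IsOpen Oa ∧ closure (Oa ∩ Z) ∩ Z ⊆ Oa ∧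
      (Oa ∩ Z ⊆ {x | a x ≤ 3 * b x}) ∧ (Z \ Oa ⊆ {x | b x ≤ 3 * a x}) := by
    rcases Z.eq_empty_or_nonempty with rfl | hZne
    · exact ⟨∅, isOpen_empty, by simp, by simp, by simp⟩
    set r : X → ℝ := fun z => (if a z ≤ b z then b z else a z) / 2 with hr
    have hrad : ∀ z ∈ Z, 0 < r z := by
      intro z hz
      have hbnn : (0:ℝ) ≤ b z := infDist_nonneg
      have hann : (0:ℝ) ≤ a z := infDist_nonneg
      simp only [hr]
      split_ifs with hs
      · rcases eq_or_lt_of_le hbnn with h0 | h0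
        · exfalso
          have hzB := hmemB z h0.symm
          have : a z = 0 := le_antisymm (h0 ▸ hs) hann
          exact hnotboth z (hmemA z this) hzB
        · linarith
      · push_neg at hs; linarith
    have hch : ∀ z : Z, ∃ O W : Set X, IsOpen O ∧ IsOpen W ∧ (z : X) ∈ O ∧
        O ∩ Z ⊆ ball (z : X) (r z) ∧ Z ⊆ O ∪ W ∧ O ∩ W ∩ Z = ∅ :=
      fun z => hZ z z.2 (ball (z : X) (r z)) isOpen_ball (mem_ball_self (hrad z z.2))
    choose O W hOopen hWopen hmemO hOball hcovz hdisz using hch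
    have hWiff : ∀ (z : Z) (x : X), x ∈ Z → (x ∈ W z ↔ x ∉ O z) := by
      intro z x hx
      constructor
      · intro hw ho
        exact eq_empty_iff_forall_notMem.mp (hdisz z) x ⟨⟨ho, hw⟩, hx⟩
      · intro ho
        rcases hcovz z hx with h | h
        · exact absurd h ho
        · exact h
    have hptA : ∀ z : Z, a z ≤ b z → ∀ x ∈ O z ∩ Z, a x ≤ 3 * b x := by
      intro z hs x hx
      have hball : x ∈ ball (z : X) (r z) := hOball z hx
      have hd0 : dist x (z : X) < (if a (z:X) ≤ b (z:X) then b (z:X) else a (z:X)) / 2 :=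
        mem_ball.mp hball
      rw [if_pos hs] at hd0
      have hd : dist x (z : X) < b (z:X) / 2 := hd0
      have h1 : a x ≤ a (z : X) + dist x (z : X) := infDist_le_infDist_add_dist
      have h2 : b (z : X) ≤ b x + dist (z : X) x := infDist_le_infDist_add_dist
      rw [dist_comm] at h2
      linarith
    have hptB : ∀ z : Z, ¬ (a z ≤ b z) → ∀ x ∈ O z ∩ Z, b x ≤ 3 * a x := by
      intro z hs x hx
      push_neg at hs
      have hball : x ∈ ball (z : X) (r z) := hOball z hx
      have hd0 : dist x (z : X) < (if a (z:X) ≤ b (z:X) then b (z:X) else a (z:X)) / 2 :=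
        mem_ball.mp hball
      rw [if_neg (not_le.mpr hs)] at hd0
      have hd : dist x (z : X) < a (z:X) / 2 := hd0
      have h1 : b x ≤ b (z : X) + dist x (z : X) := infDist_le_infDist_add_dist
      have h2 : a (z : X) ≤ a x + dist (z : X) x := infDist_le_infDist_add_dist
      rw [dist_comm] at h2
      linarith
    obtain ⟨T, hTc, hTeq⟩ := TopologicalSpace.isOpen_iUnion_countable O hOopen
    have hcover : Z ⊆ ⋃ z : Z, O z := fun x hx => mem_iUnion.mpr ⟨⟨x, hx⟩, hmemO _⟩
    have hTne : T.Nonempty := by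
      obtain ⟨x, hx⟩ := hZne
      have hx2 : x ∈ ⋃ z ∈ T, O z := by rw [hTeq]; exact hcover hx
      obtain ⟨z, hz, -⟩ := mem_iUnion₂.mp hx2
      exact ⟨z, hz⟩
    obtain ⟨f, hf⟩ := hTc.exists_eq_range hTne
    have hcover' : ∀ x ∈ Z, ∃ n : ℕ, x ∈ O (f n) := by
      intro x hx
      have hx2 : x ∈ ⋃ z ∈ T, O z := by rw [hTeq]; exact hcover hx
      obtain ⟨z, hz, hmem⟩ := mem_iUnion₂.mp hx2
      rw [hf] at hz
      obtain ⟨n, rfl⟩ := hz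
      exact ⟨n, hmem⟩
    set Gn : ℕ → Set X := fun n => O (f n) ∩ ⋂ j ∈ Finset.range n, W (f j) with hGn
    have hGopen : ∀ n, IsOpen (Gn n) := fun n =>
      (hOopen _).inter (isOpen_biInter_finset fun j _ => hWopen _)
    set Oa : Set X := ⋃ (n : ℕ) (_ : a (f n : X) ≤ b (f n : X)), Gn n with hOa
    have hOaopen : IsOpen Oa := isOpen_iUnion fun n => isOpen_iUnion fun _ => hGopen n
    -- the minimal-index set membership
    have hmin : ∀ x ∈ Z, x ∉ Oa → ∃ n : ℕ, x ∈ Gn n ∧ ¬ (a (f n : X) ≤ b (f n : X)) := by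
      intro x hx hxo
      have hex := hcover' x hx
      set n := Nat.find hex with hn
      refine ⟨n, ⟨Nat.find_spec hex, ?_⟩, ?_⟩
      · apply mem_iInter₂.mpr
        intro j hj
        rw [Finset.mem_range] at hj
        have : x ∉ O (f j) := Nat.find_min hex hj
        exact (hWiff (f j) x hx).mpr this
      · intro hs
        exact hxo (mem_iUnion.mpr ⟨n, mem_iUnion.mpr ⟨hs,
          ⟨Nat.find_spec hex, mem_iInter₂.mpr fun j hj => by
            rw [Finset.mem_range] at hj
            exact (hWiff (f j) x hx).mpr (Nat.find_min hex hj)⟩⟩⟩)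
    refine ⟨Oa, hOaopen, ?_, ?_, ?_⟩
    · -- closure (Oa ∩ Z) ∩ Z ⊆ Oa
      rintro x ⟨hxc, hxZ⟩
      by_contra hxo
      obtain ⟨n, hxg, hns⟩ := hmin x hxZ hxo
      have hdisj : Gn n ∩ (Oa ∩ Z) = ∅ := by
        apply eq_empty_iff_forall_notMem.mpr
        rintro y ⟨hyg, hyo, hyZ⟩
        obtain ⟨m, hm⟩ := mem_iUnion.mp hyo
        obtain ⟨hms, hym⟩ := mem_iUnion.mp hm
        have hmn : m ≠ n := fun h => hns (h ▸ hms)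
        rcases lt_or_gt_of_ne hmn with hlt | hlt
        · -- m < n : y ∈ Gn n ⊆ W (f m), y ∈ Gn m ⊆ O (f m)
          have hyW : y ∈ W (f m) :=
            mem_iInter₂.mp hyg.2 m (Finset.mem_range.mpr hlt)
          have hyO : y ∈ O (f m) := hym.1
          exact (hWiff (f m) y hyZ).mp hyW hyO
        · have hyW : y ∈ W (f n) :=
            mem_iInter₂.mp hym.2 n (Finset.mem_range.mpr hlt)
          exact (hWiff (f n) y hyZ).mp hyW hyg.1
      have := mem_closure_iff.mp hxc (Gn n) (hGopen n) hxg
      rw [hdisj] at this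
      exact this.ne_empty rfl
    · rintro x ⟨hxo, hxZ⟩
      obtain ⟨n, hn⟩ := mem_iUnion.mp hxo
      obtain ⟨hns, hxg⟩ := mem_iUnion.mp hn
      exact hptA (f n) hns x ⟨hxg.1, hxZ⟩
    · rintro x ⟨hxZ, hxo⟩
      obtain ⟨n, hxg, hns⟩ := hmin x hxZ hxo
      exact hptB (f n) hns x ⟨hxg.1, hxZ⟩
  obtain ⟨Oa, hOaopen, hOacl, hOaA, hOaB⟩ := key
  set ZA : Set X := Oa ∩ Z with hZA
  set ZB : Set X := Z \ Oa with hZB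
  set C : Set X := A ∪ ZA with hC
  set D : Set X := B ∪ ZB with hD
  have hsetAcl : IsClosed {x | a x ≤ 3 * b x} :=
    isClosed_le (continuous_infDist_pt A) ((continuous_const).mul (continuous_infDist_pt B))
  have hsetBcl : IsClosed {x | b x ≤ 3 * a x} :=
    isClosed_le (continuous_infDist_pt B) ((continuous_const).mul (continuous_infDist_pt A))
  have hA3 : ∀ x ∈ {x | a x ≤ 3 * b x}, x ∉ B := by
    intro x hx hxB
    have hb0 : b x = 0 := infDist_zero_of_mem hxB
    have : a x ≤ 0 := by have := hx; simp only [mem_setOf_eq, hb0] at this; linarith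
    exact hnotboth x (hmemA x (le_antisymm this infDist_nonneg)) hxB
  have hB3 : ∀ x ∈ {x | b x ≤ 3 * a x}, x ∉ A := by
    intro x hx hxA
    have ha0 : a x = 0 := infDist_zero_of_mem hxA
    have : b x ≤ 0 := by have := hx; simp only [mem_setOf_eq, ha0] at this; linarith
    exact hnotboth x hxA (hmemB x (le_antisymm this infDist_nonneg))
  have hclZA : closure ZA ⊆ {x | a x ≤ 3 * b x} := closure_minimal hOaA hsetAcl
  have hclZB : closure ZB ⊆ {x | b x ≤ 3 * a x} := closure_minimal hOaB hsetBcl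
  have hCD : closure C ∩ D = ∅ := by
    apply eq_empty_iff_forall_notMem.mpr
    rintro x ⟨hxc, hxd⟩
    rw [hC, closure_union, hA.closure_eq] at hxc
    rcases hxc with hxA | hxZA
    · rcases hxd with hxB | hxZB
      · exact hnotboth x hxA hxB
      · exact hB3 x (hclZB (subset_closure hxZB)) hxA
    · rcases hxd with hxB | hxZB
      · exact hA3 x (hclZA hxZA) hxB
      · -- x ∈ closure ZA, x ∈ ZB = Z \ Oa
        exact hxZB.2 (hOacl ⟨hxZA, hxZB.1⟩)
  have hDC : C ∩ closure D = ∅ := by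
    apply eq_empty_iff_forall_notMem.mpr
    rintro x ⟨hxc, hxd⟩
    rw [hD, closure_union, hB.closure_eq] at hxd
    rcases hxd with hxB | hxZB
    · rcases hxc with hxA | hxZA
      · exact hnotboth x hxA hxB
      · exact hA3 x (hclZA (subset_closure hxZA)) hxB
    · rcases hxc with hxA | hxZA
      · exact hB3 x (hclZB hxZB) hxA
      · -- x ∈ ZA = Oa ∩ Z (open nbhd Oa misses ZB)
        have : Oa ∩ ZB = ∅ := by
          apply eq_empty_iff_forall_notMem.mpr
          rintro y ⟨hyo, hyz⟩
          exact hyz.2 hyo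
        have hne := mem_closure_iff.mp hxZB Oa hOaopen hxZA.1
        rw [this] at hne
        exact hne.ne_empty rfl
  have hCne : C.Nonempty := hAne.mono subset_union_left
  have hDne : D.Nonempty := hBne.mono subset_union_left
  have hCU : C ⊆ {x | infDist x C < infDist x D} := by
    intro x hx
    have h1 : infDist x C = 0 := infDist_zero_of_mem hx
    have h2 : infDist x D ≠ 0 := by
      intro h0
      have hcl : x ∈ closure D := (mem_closure_iff_infDist_zero hDne).mpr h0
      exact eq_empty_iff_forall_notMem.mp hDC x ⟨hx, hcl⟩
    have h3 := lt_of_le_of_ne infDist_nonneg (Ne.symm h2)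
    simp only [mem_setOf_eq, h1]
    exact h3
  have hDW : D ⊆ {x | infDist x D < infDist x C} := by
    intro x hx
    have h1 : infDist x D = 0 := infDist_zero_of_mem hx
    have h2 : infDist x C ≠ 0 := by
      intro h0
      have hcl : x ∈ closure C := (mem_closure_iff_infDist_zero hCne).mpr h0
      exact eq_empty_iff_forall_notMem.mp hCD x ⟨hcl, hx⟩
    have h3 := lt_of_le_of_ne infDist_nonneg (Ne.symm h2)
    simp only [mem_setOf_eq, h1]
    exact h3
  refine ⟨{x | infDist x C < infDist x D}, {x | infDist x D < infDist x C},
    isOpen_lt (continuous_infDist_pt C) (continuous_infDist_pt D),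
    isOpen_lt (continuous_infDist_pt D) (continuous_infDist_pt C),
    fun x hx => hCU (Or.inl hx),
    fun x hx => hDW (Or.inl hx), ?_, ?_⟩
  · apply eq_empty_iff_forall_notMem.mpr
    rintro y ⟨hy1, hy2⟩
    simp only [mem_setOf_eq] at hy1 hy2
    linarith
  · intro x hx
    by_cases hxo : x ∈ Oa
    · exact Or.inl (hCU (Or.inr ⟨hxo, hx⟩))
    · exact Or.inr (hDW (Or.inr ⟨hx, hxo⟩))


def relFr (S V : Set X) : Set X := (closure (V ∩ S) \ V) ∩ S

lemma relFr_subset (S V : Set X) : relFr S V ⊆ S := inter_subset_right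

lemma relFr_isClosed {S V : Set X} (hS : IsClosed S) (hV : IsOpen V) : IsClosed (relFr S V) :=
  (isClosed_closure.sdiff hV).inter hS

def Ind1rel (S : Set X) : Prop :=
  ∀ x ∈ S, ∀ U : Set X, IsOpen U → x ∈ U →
    ∃ V : Set X, IsOpen V ∧ x ∈ V ∧ V ∩ S ⊆ U ∧ Ind0rel (relFr S V)

lemma sep_point [SecondCountableTopology X] (S Z : Set X) (hZS : Z ⊆ S) (hZ : Ind0rel Z)
    (x : X) (U₀ : Set X) (hU : IsOpen U₀) (hx : x ∈ U₀) :
    ∃ V : Set X, IsOpen V ∧ x ∈ V ∧ V ∩ S ⊆ U₀ ∧ relFr S V ∩ Z = ∅ := by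
  have hdis : ({x} : Set X) ∩ closure (S \ U₀) = ∅ := by
    apply eq_empty_iff_forall_notMem.mpr
    rintro y ⟨hy1, hy2⟩
    rw [mem_singleton_iff] at hy1
    subst hy1
    have : y ∈ U₀ᶜ := closure_minimal (fun z hz => hz.2) (hU.isClosed_compl) hy2
    exact this hx
  obtain ⟨U, W, hUo, hWo, hAU, hBW, hUW, hZUW⟩ := sep Z hZ {x} (closure (S \ U₀))
    isClosed_singleton isClosed_closure hdis
  refine ⟨U, hUo, hAU rfl, ?_, ?_⟩
  · rintro y ⟨hyU, hyS⟩
    by_contra hyU₀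
    have hyc : y ∈ closure (S \ U₀) := subset_closure ⟨hyS, hyU₀⟩
    exact eq_empty_iff_forall_notMem.mp hUW y ⟨hyU, hBW hyc⟩
  · apply eq_empty_iff_forall_notMem.mpr
    rintro y ⟨⟨⟨hycl, hyU⟩, hyS⟩, hyZ⟩
    rcases hZUW hyZ with h | h
    · exact hyU h
    · obtain ⟨w, hw⟩ := mem_closure_iff.mp hycl W hWo h
      exact eq_empty_iff_forall_notMem.mp hUW w ⟨hw.2.1, hw.1⟩

inductive GSet : Set X → Prop where
  | mk (S : Set X) (V : X → Set X → Set X)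
      (hro : ∀ x ∈ S, ∀ U : Set X, IsOpen U → x ∈ U →
        IsOpen (V x U) ∧ x ∈ V x U ∧ V x U ∩ S ⊆ U)
      (hfr : ∀ x ∈ S, ∀ U : Set X, IsOpen U → x ∈ U → GSet (relFr S (V x U))) : GSet S

lemma GSet.intro' (S : Set X)
    (h : ∀ x ∈ S, ∀ U : Set X, IsOpen U → x ∈ U →
      ∃ V : Set X, IsOpen V ∧ x ∈ V ∧ V ∩ S ⊆ U ∧ GSet (relFr S V)) : GSet S := by
  classical
  choose! V h1 h2 h3 h4 using h
  exact GSet.mk S V (fun x hx U hU hxU => ⟨h1 x hx U hU hxU, h2 x hx U hU hxU, h3 x hx U hU hxU⟩)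
    (fun x hx U hU hxU => h4 x hx U hU hxU)

lemma GSet.empty : GSet (∅ : Set X) :=
  GSet.mk ∅ (fun _ _ => ∅) (fun x hx => absurd hx (notMem_empty x))
    (fun x hx => absurd hx (notMem_empty x))

lemma GSet.nonempty_of_not {S : Set X} (h : ¬ GSet S) : S.Nonempty := by
  rcases S.eq_empty_or_nonempty with rfl | h'
  · exact absurd GSet.empty h
  · exact h'

lemma gset_closed [SecondCountableTopology X] [CompactSpace X] (A : ℕ → Set X)
    (hAU : (⋃ n, A n) = univ) (hA0 : ∀ n, Ind0rel (A n))
    (S : Set X) (hS : IsClosed S) : GSet S := by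
  by_contra hG
  have step : ∀ (p : {F : Set X // IsClosed F ∧ ¬ GSet F}) (n : ℕ),
      ∃ q : {F : Set X // IsClosed F ∧ ¬ GSet F}, q.1 ⊆ p.1 ∧ q.1 ∩ A n = ∅ := by
    rintro ⟨F, hFcl, hFG⟩ n
    have hnot : ¬ (∀ x ∈ F, ∀ U : Set X, IsOpen U → x ∈ U →
        ∃ V : Set X, IsOpen V ∧ x ∈ V ∧ V ∩ F ⊆ U ∧ GSet (relFr F V)) :=
      fun h => hFG (GSet.intro' F h)
    push_neg at hnot
    obtain ⟨x, hxF, U, hU, hxU, hall⟩ := hnot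
    obtain ⟨V, hVo, hxV, hVU, hVZ⟩ := sep_point F (A n ∩ F) inter_subset_right
      (ind0rel_mono inter_subset_left (hA0 n)) x U hU hxU
    refine ⟨⟨relFr F V, relFr_isClosed hFcl hVo, hall V hVo hxV hVU⟩, relFr_subset F V, ?_⟩
    apply eq_empty_iff_forall_notMem.mpr
    rintro y ⟨hy1, hy2⟩
    exact eq_empty_iff_forall_notMem.mp hVZ y ⟨hy1, hy2, relFr_subset F V hy1⟩
  choose next h1 h2 using step
  let seq : ℕ → {F : Set X // IsClosed F ∧ ¬ GSet F} :=
    fun n => Nat.rec ⟨S, hS, hG⟩ (fun k p => next p k) n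
  have hsub : ∀ n, (seq (n+1)).1 ⊆ (seq n).1 := fun n => h1 (seq n) n
  have hne : ∀ n, (seq n).1.Nonempty := fun n => GSet.nonempty_of_not (seq n).2.2
  have hint := IsCompact.nonempty_iInter_of_sequence_nonempty_isCompact_isClosed
    (fun n => (seq n).1) hsub hne ((seq 0).2.1.isCompact) (fun n => (seq n).2.1)
  obtain ⟨y, hy⟩ := hint
  have hyA : ∀ n, y ∉ A n := by
    intro n hyA
    have hy1 : y ∈ (seq (n+1)).1 := mem_iInter.mp hy (n+1)
    exact eq_empty_iff_forall_notMem.mp (h2 (seq n) n) y ⟨hy1, hyA⟩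
  have hyu : y ∈ ⋃ n, A n := by rw [hAU]; exact mem_univ y
  obtain ⟨n, hn⟩ := mem_iUnion.mp hyu
  exact hyA n hn

lemma descend : ∀ (S : Set X), GSet S → IsClosed S → ¬ Ind0rel S →
    ∃ K : Set X, K ⊆ S ∧ IsClosed K ∧ Ind1rel K ∧ ¬ Ind0rel K := by
  intro S hG
  induction hG with
  | mk S V hro hfr IH =>
    intro hScl hS0
    by_cases hc : Ind1rel S
    · exact ⟨S, subset_rfl, hScl, hc, hS0⟩
    · unfold Ind1rel at hc
      push_neg at hc
      obtain ⟨x, hxS, U, hU, hxU, hall⟩ := hc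
      obtain ⟨hVo, hxV, hVU⟩ := hro x hxS U hU hxU
      have hKcl : IsClosed (relFr S (V x U)) := relFr_isClosed hScl hVo
      have hK0 : ¬ Ind0rel (relFr S (V x U)) := hall (V x U) hVo hxV hVU
      obtain ⟨K, hKsub, h2, h3, h4⟩ := IH x hxS U hU hxU hKcl hK0
      exact ⟨K, hKsub.trans (relFr_subset S (V x U)), h2, h3, h4⟩

lemma ind1rel_indLe1 (K : Set X) (h : Ind1rel K) : IndLe 1 K := by
  show ∀ (x : ↥K) (U : Set ↥K), IsOpen U → x ∈ U →
      ∃ V : Set ↥K, IsOpen V ∧ x ∈ V ∧ V ⊆ U ∧ IndLe 0 (frontier V)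
  intro x U hU hxU
  obtain ⟨U', hU', hpre⟩ := IsInducing.subtypeVal.isOpen_iff.mp hU
  obtain ⟨V, hVo, hxV, hVK, hV0⟩ := h x.1 x.2 U' hU' (by rw [← hpre] at hxU; exact hxU)
  refine ⟨Subtype.val ⁻¹' V, hVo.preimage continuous_subtype_val, hxV, ?_, ?_⟩
  · intro y hy
    rw [← hpre]
    exact hVK ⟨hy, y.2⟩
  · have hfr : frontier (Subtype.val ⁻¹' V : Set ↥K) ⊆ Subtype.val ⁻¹' (relFr K V) := by
      rw [IsOpen.frontier_eq (hVo.preimage continuous_subtype_val)]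
      rintro y ⟨hy1, hy2⟩
      have heq : (Subtype.val ⁻¹' V : Set ↥K) = Subtype.val ⁻¹' (V ∩ K) := by
        ext z
        exact ⟨fun hz => ⟨hz, z.2⟩, fun hz => hz.1⟩
      rw [heq] at hy1
      have hc : y ∈ Subtype.val ⁻¹' closure (V ∩ K) :=
        Continuous.closure_preimage_subset continuous_subtype_val (V ∩ K) hy1
      exact ⟨⟨hc, hy2⟩, y.2⟩
    exact indLe0_of_inducing
      (fun p : ↥(frontier (Subtype.val ⁻¹' V : Set ↥K)) => (p.1 : X))
      (IsInducing.subtypeVal.comp IsInducing.subtypeVal)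
      (by rintro _ ⟨p, rfl⟩; exact hfr p.2) hV0

end Aux

/-- Every countable-dimensional compact metrizable space of positive
dimension contains a one-dimensional compact subset. -/
theorem stmt_2 (X : Type) [MetricSpace X] [CompactSpace X]
    (hcd : CountableDimensional (univ : Set X))
    (hpos : ¬ IndLe 0 X) :
    ∃ K : Set X, IsCompact K ∧ IndLe 1 K ∧ ¬ IndLe 0 K := by
  obtain ⟨A, hAU, hA0⟩ := hcd
  have hA0' : ∀ n, Ind0rel (A n) := fun n => ind0rel_of_indLe0 (A n) (hA0 n)
  have hGuniv : GSet (univ : Set X) := gset_closed A hAU hA0' univ isClosed_univ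
  have hnuniv : ¬ Ind0rel (univ : Set X) := by
    intro h
    exact hpos (indLe0_of_inducing id IsInducing.id (subset_univ _) h)
  obtain ⟨K, -, hKcl, hK1, hK0⟩ := descend univ hGuniv isClosed_univ hnuniv
  exact ⟨K, hKcl.isCompact, ind1rel_indLe1 K hK1, fun h => hK0 (ind0rel_of_indLe0 K h)⟩
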